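/- Under the star-algebra setup with an integration functional I, one has the identity I(α·α*·Ω)·I(ω^{2p}·Ω) − I(α·ω^p·Ω)·I(α*·ω^p·Ω) = I(ω^{2p}·Ω) · Σ_{i=1}^p I(α_i·(α_i)*·ω^{2(p−i)}·Ω). -/

import Mathlib

/-! Write `α = λ ωᵖ + ∑ᵢ aᵢ ωᵖ⁻ⁱ` and `ν = ω²ᵖ Ω`. Primitivity kills every product
`aᵢ ωᵏ Ω` with `k > 2(p − i)`, and this passes to `aᵢ*` because `ω` and `Ω` are self-adjoint.
Hence `α ωᵖ Ω = λ ν`, and in `α α* Ω` both the mixed terms `λ ωᵖ · aⱼ* ωᵖ⁻ʲ` and the cross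
terms `aᵢ ωᵖ⁻ⁱ · aⱼ* ωᵖ⁻ʲ` with `i ≠ j` vanish, leaving `|λ|² ν + ∑ᵢ aᵢ aᵢ* ω^{2(p−i)} Ω`.
Applying `I`, the `|λ|² I(ν)²` terms cancel. The star enters only through the primitivity of
the `aᵢ*`, so the computation works for any two primitive decompositions `α`, `β`; the
theorem is the case `β = α*`. -/

open Finset

theorem mul_pow_mul_eq_zero_of_le {M : Type*} [CommMonoidWithZero M] {a ω Ω : M} {m k : ℕ}
    (h : a * ω ^ m * Ω = 0) (hk : m ≤ k) : a * ω ^ k * Ω = 0 := by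
  obtain ⟨n, rfl⟩ := Nat.exists_eq_add_of_le hk
  rw [pow_add, ← mul_assoc, mul_right_comm _ (ω ^ n), h, zero_mul]

theorem star_mul_pow_mul_eq_zero {R : Type*} [CommSemiring R] [StarRing R] {a ω Ω : R} {k : ℕ}
    (hω : star ω = ω) (hΩ : star Ω = Ω) (h : a * ω ^ k * Ω = 0) : star a * ω ^ k * Ω = 0 := by
  have := congrArg star h
  rwa [star_mul, star_mul, star_pow, hω, hΩ, star_zero, mul_comm, mul_comm (ω ^ k)] at this

def IsPrimitiveFamily {A : Type*} [Monoid A] [Zero A] (ω Ω : A) (p : ℕ) (a : ℕ → A) : Prop :=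
  ∀ i ∈ Icc 1 p, a i * ω ^ (2 * (p - i) + 1) * Ω = 0

theorem IsPrimitiveFamily.star {R : Type*} [CommSemiring R] [StarRing R] {ω Ω : R} {p : ℕ}
    {a : ℕ → R} (hω : star ω = ω) (hΩ : star Ω = Ω) (ha : IsPrimitiveFamily ω Ω p a) :
    IsPrimitiveFamily ω Ω p (fun i => star (a i)) :=
  fun i hi => star_mul_pow_mul_eq_zero hω hΩ (ha i hi)

section PrimitiveDecomposition

variable {R A : Type*} [CommRing R] [CommRing A] [Algebra R A] {p : ℕ} {ω Ω : A}
  {a b : ℕ → A}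

theorem sum_mul_pow_mul_eq_zero
    (ha : IsPrimitiveFamily ω Ω p a) :
    (∑ i ∈ Icc 1 p, a i * ω ^ (p - i)) * ω ^ p * Ω = 0 := by
  rw [sum_mul, sum_mul]
  refine sum_eq_zero fun i hi => ?_
  have hi' := mem_Icc.mp hi
  rw [mul_assoc (a i), ← pow_add]
  exact mul_pow_mul_eq_zero_of_le (ha i hi) (by omega)

theorem sum_mul_sum_mul_eq_sum
    (ha : IsPrimitiveFamily ω Ω p a)
    (hb : IsPrimitiveFamily ω Ω p b) :
    (∑ i ∈ Icc 1 p, a i * ω ^ (p - i)) * (∑ j ∈ Icc 1 p, b j * ω ^ (p - j)) * Ω =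
      ∑ i ∈ Icc 1 p, a i * b i * ω ^ (2 * (p - i)) * Ω := by
  have cross : ∀ i ∈ Icc 1 p, ∀ j ∈ Icc 1 p, j ≠ i →
      a i * ω ^ (p - i) * (b j * ω ^ (p - j)) * Ω = 0 := by
    intro i hi j hj hji
    have hi' := mem_Icc.mp hi
    have hj' := mem_Icc.mp hj
    rcases hji.lt_or_gt with hlt | hgt
    · calc _ = a i * ω ^ (p - i + (p - j)) * Ω * b j := by rw [pow_add]; ring
        _ = 0 := by rw [mul_pow_mul_eq_zero_of_le (ha i hi) (by omega), zero_mul]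
    · calc _ = b j * ω ^ (p - i + (p - j)) * Ω * a i := by rw [pow_add]; ring
        _ = 0 := by rw [mul_pow_mul_eq_zero_of_le (hb j hj) (by omega), zero_mul]
  rw [sum_mul_sum, sum_mul]
  refine sum_congr rfl fun i hi => ?_
  rw [sum_mul, sum_eq_single_of_mem i hi (cross i hi), two_mul, pow_add]
  ring

theorem add_sum_mul_pow_mul_eq_smul (l : R)
    (ha : IsPrimitiveFamily ω Ω p a) :
    (l • ω ^ p + ∑ i ∈ Icc 1 p, a i * ω ^ (p - i)) * ω ^ p * Ω = l • (ω ^ (2 * p) * Ω) := by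
  rw [add_mul, add_mul, sum_mul_pow_mul_eq_zero ha, add_zero, smul_mul_assoc, smul_mul_assoc,
    ← pow_add, two_mul]

theorem add_sum_mul_add_sum_mul_eq (l l' : R)
    (ha : IsPrimitiveFamily ω Ω p a)
    (hb : IsPrimitiveFamily ω Ω p b) :
    (l • ω ^ p + ∑ i ∈ Icc 1 p, a i * ω ^ (p - i)) *
        (l' • ω ^ p + ∑ j ∈ Icc 1 p, b j * ω ^ (p - j)) * Ω =
      (l * l') • (ω ^ (2 * p) * Ω) + ∑ i ∈ Icc 1 p, a i * b i * ω ^ (2 * (p - i)) * Ω := by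
  set σa := ∑ i ∈ Icc 1 p, a i * ω ^ (p - i)
  set σb := ∑ j ∈ Icc 1 p, b j * ω ^ (p - j)
  have expand : (l • ω ^ p + σa) * (l' • ω ^ p + σb) * Ω =
      (l * l') • (ω ^ p * ω ^ p * Ω) + l • (σb * ω ^ p * Ω) + l' • (σa * ω ^ p * Ω) +
        σa * σb * Ω := by
    simp only [add_mul, mul_add, smul_mul_assoc, mul_smul_comm, smul_add, smul_smul,
      mul_comm (ω ^ p) σb, mul_comm l' l]
    abel
  rw [expand, sum_mul_pow_mul_eq_zero ha, sum_mul_pow_mul_eq_zero hb, sum_mul_sum_mul_eq_sum ha hb,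
    ← pow_add, ← two_mul, smul_zero, smul_zero, add_zero, add_zero]

theorem map_mul_map_sub_map_mul_map_eq (I : A →ₗ[R] R) (l l' : R)
    (ha : IsPrimitiveFamily ω Ω p a)
    (hb : IsPrimitiveFamily ω Ω p b) :
    let α := l • ω ^ p + ∑ i ∈ Icc 1 p, a i * ω ^ (p - i)
    let β := l' • ω ^ p + ∑ j ∈ Icc 1 p, b j * ω ^ (p - j)
    I (α * β * Ω) * I (ω ^ (2 * p) * Ω) - I (α * ω ^ p * Ω) * I (β * ω ^ p * Ω) =
      I (ω ^ (2 * p) * Ω) * ∑ i ∈ Icc 1 p, I (a i * b i * ω ^ (2 * (p - i)) * Ω) := by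
  intro α β
  rw [add_sum_mul_add_sum_mul_eq l l' ha hb, add_sum_mul_pow_mul_eq_smul l ha,
    add_sum_mul_pow_mul_eq_smul l' hb, map_add, map_sum, map_smul, map_smul, map_smul,
    smul_eq_mul, smul_eq_mul, smul_eq_mul]
  ring

end PrimitiveDecomposition

theorem stmt7_general {A : Type*} [CommRing A] [Algebra ℂ A] [StarRing A] [StarModule ℂ A]
    (p : ℕ) (ω Ω : A) (hω : star ω = ω) (hΩ : star Ω = Ω)
    (l : ℂ) (a : ℕ → A)
    (hprim : ∀ i ∈ Finset.Icc 1 p, a i * ω ^ (2 * (p - i) + 1) * Ω = 0)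
    (α : A) (hα : α = l • ω ^ p + ∑ i ∈ Finset.Icc 1 p, a i * ω ^ (p - i))
    (I : A →ₗ[ℂ] ℂ) :
    I (α * star α * Ω) * I (ω ^ (2 * p) * Ω) -
      I (α * ω ^ p * Ω) * I (star α * ω ^ p * Ω) =
    I (ω ^ (2 * p) * Ω) *
      ∑ i ∈ Finset.Icc 1 p, I (a i * star (a i) * ω ^ (2 * (p - i)) * Ω) := by
  have hstar : star α = starRingEnd ℂ l • ω ^ p + ∑ i ∈ Icc 1 p, star (a i) * ω ^ (p - i) := by
    simp only [hα, star_add, star_smul, star_pow, hω, star_sum, star_mul, mul_comm (ω ^ _),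
      starRingEnd_apply]
  rw [hstar, hα]
  exact map_mul_map_sub_map_mul_map_eq I l (starRingEnd ℂ l) hprim (IsPrimitiveFamily.star hω hΩ hprim)

/-- In a commutative star `ℂ`-algebra `A` with `ω* = ω`, `Ω* = Ω`, primitive
elements `a i` (`1 ≤ i ≤ p`), `α = λ • ω^p + ∑ a i * ω^(p−i)` and an integration functional
`I : A →ₗ[ℂ] ℂ` with `I(x*) = conj (I x)`, one has the key identity
`I(α α* Ω) I(ω^{2p} Ω) − I(α ω^p Ω) I(α* ω^p Ω) = I(ω^{2p} Ω) ∑ᵢ I(aᵢ aᵢ* ω^{2(p−i)} Ω)`. -/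
theorem stmt7 {A : Type*} [CommRing A] [Algebra ℂ A] [StarRing A] [StarModule ℂ A]
    (p : ℕ) (hp : 1 ≤ p) (ω Ω : A) (hω : star ω = ω) (hΩ : star Ω = Ω)
    (l : ℂ) (a : ℕ → A)
    (hprim : ∀ i ∈ Finset.Icc 1 p, a i * ω ^ (2 * (p - i) + 1) * Ω = 0)
    (α : A) (hα : α = l • ω ^ p + ∑ i ∈ Finset.Icc 1 p, a i * ω ^ (p - i))
    (I : A →ₗ[ℂ] ℂ) (hI : ∀ x : A, I (star x) = starRingEnd ℂ (I x)) :
    I (α * star α * Ω) * I (ω ^ (2 * p) * Ω) -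
      I (α * ω ^ p * Ω) * I (star α * ω ^ p * Ω) =
    I (ω ^ (2 * p) * Ω) *
      ∑ i ∈ Finset.Icc 1 p, I (a i * star (a i) * ω ^ (2 * (p - i)) * Ω) :=
  stmt7_general p ω Ω hω hΩ l a hprim α hα I
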